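/- For every n ∈ ℕ and every finite sequence (i_0, …, i_n) of positive integers, the Lebesgue measure of the cylinder I_{i_0…i_n} = ⋂_{k=0}^n T^{−k}([i_k − 1, i_k]) satisfies λ(I_{i_0…i_n}) ≤ 5^{−n}. -/

import Mathlib

open Set Filter

noncomputable section

/-- `ell n = min {k ∈ ℤ⁺ : n ≤ 4^k}`. -/
def ell (n : ℕ) : ℕ := sInf {k : ℕ | 1 ≤ k ∧ n ≤ 4 ^ k}

/-- The value of the map `T` at the nonnegative integer `n`:
`0` if `n` is even and `4 ^ ℓ(n) + 1` if `n` is odd. -/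
def Tval (n : ℕ) : ℝ := if Even n then 0 else 4 ^ ell n + 1

/-- `T : [0,∞) → [0,∞)` is the unique continuous map which is affine on each
integer interval `[n-1, n]` and takes the value `Tval n` at every nonnegative
integer `n`.  This is expressed by linear interpolation on each `[n, n+1]`. -/
def IsT (T : ℝ → ℝ) : Prop :=
  ∀ n : ℕ, ∀ x ∈ Set.Icc (n : ℝ) (n + 1),
    T x = ((n : ℝ) + 1 - x) * Tval n + (x - (n : ℝ)) * Tval (n + 1)

/-- `(x_k)` is a `δ`-pseudo orbit of `T` in `[0,∞)`. -/
def IsPseudoOrbit (T : ℝ → ℝ) (δ : ℝ) (x : ℕ → ℝ) : Prop :=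
  (∀ k, 0 ≤ x k) ∧ ∀ k, |x (k + 1) - T (x k)| < δ


open MeasureTheory ENNReal

/-! The map `T` is affine on each `[m - 1, m]` with slope `±(4 ^ ℓ + 1)`, of absolute value at
least `5`, so the part of `[m - 1, m]` that `T` sends into a set `S` has measure at most
`λ(S) / 5`. Since `I_{i₀…iₙ} = [i₀ - 1, i₀] ∩ T⁻¹ I_{i₁…iₙ}`, induction on `n` gives the bound. -/

lemma one_le_ell (n : ℕ) : 1 ≤ ell n :=
  (Nat.sInf_mem (s := {k : ℕ | 1 ≤ k ∧ n ≤ 4 ^ k})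
    ⟨n + 1, by omega, (Nat.lt_pow_self (by norm_num)).le.trans
      (Nat.pow_le_pow_right (by norm_num) n.le_succ)⟩).1

lemma Tval_of_even {n : ℕ} (h : Even n) : Tval n = 0 := if_pos h

lemma five_le_Tval_of_odd {n : ℕ} (h : Odd n) : 5 ≤ Tval n := by
  rw [Tval, if_neg (Nat.not_even_iff_odd.mpr h)]
  have : (4 : ℝ) ≤ 4 ^ ell n :=
    le_self_pow₀ (by norm_num) (Nat.one_le_iff_ne_zero.mp (one_le_ell n))
  linarith

lemma five_le_abs_Tval_succ_sub_Tval (n : ℕ) : 5 ≤ |Tval (n + 1) - Tval n| := by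
  rcases Nat.even_or_odd n with h | h
  · rw [Tval_of_even h, sub_zero]
    exact (five_le_Tval_of_odd h.add_one).trans (le_abs_self _)
  · rw [Tval_of_even h.add_one, zero_sub, abs_neg]
    exact (five_le_Tval_of_odd h).trans (le_abs_self _)

lemma IsT.eqOn_Icc {T : ℝ → ℝ} (hT : IsT T) (n : ℕ) :
    EqOn T (fun x => (Tval (n + 1) - Tval n) * x + ((n + 1) * Tval n - n * Tval (n + 1)))
      (Icc n (n + 1)) := fun x hx => by
  rw [hT n x hx]
  ring

lemma volume_inter_preimage_le_of_eqOn_affine {f : ℝ → ℝ} {s : Set ℝ} {a b : ℝ} (ha : a ≠ 0)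
    (hf : EqOn f (fun x => a * x + b) s) (S : Set ℝ) :
    volume (s ∩ f ⁻¹' S) ≤ ENNReal.ofReal |a|⁻¹ * volume S :=
  calc volume (s ∩ f ⁻¹' S)
      ≤ volume ((fun x => a * x + b) ⁻¹' S) :=
        measure_mono fun x ⟨hx, hxS⟩ => by rwa [mem_preimage, hf hx] at hxS
    _ = ENNReal.ofReal |a|⁻¹ * volume S := by
        rw [show (fun x => a * x + b) = (· + b) ∘ (a * ·) from rfl, preimage_comp,
          Real.volume_preimage_mul_left ha, measure_preimage_add_right, abs_inv]

lemma IsT.volume_Icc_inter_preimage_le {T : ℝ → ℝ} (hT : IsT T) {m : ℕ} (hm : 1 ≤ m)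
    (S : Set ℝ) : volume (Icc ((m : ℝ) - 1) m ∩ T ⁻¹' S) ≤ 5⁻¹ * volume S := by
  obtain ⟨n, rfl⟩ : ∃ n, m = n + 1 := ⟨m - 1, by omega⟩
  have hslope := five_le_abs_Tval_succ_sub_Tval n
  have ha : Tval (n + 1) - Tval n ≠ 0 := abs_pos.mp (by linarith)
  push_cast
  rw [add_sub_cancel_right]
  calc volume (Icc (n : ℝ) (n + 1) ∩ T ⁻¹' S)
      ≤ ENNReal.ofReal |Tval (n + 1) - Tval n|⁻¹ * volume S :=
        volume_inter_preimage_le_of_eqOn_affine ha (hT.eqOn_Icc n) S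
    _ ≤ 5⁻¹ * volume S := by
        gcongr
        rw [← ENNReal.ofReal_ofNat 5, ← ENNReal.ofReal_inv_of_pos (by norm_num)]
        exact ENNReal.ofReal_le_ofReal (inv_anti₀ (by norm_num) hslope)

lemma iInter_preimage_iterate_fin_succ {α : Type*} (f : α → α) {n : ℕ}
    (A : Fin (n + 2) → Set α) :
    ⋂ k : Fin (n + 2), f^[k] ⁻¹' A k = A 0 ∩ f ⁻¹' ⋂ k : Fin (n + 1), f^[k] ⁻¹' A k.succ := by
  ext x
  simp [Fin.forall_fin_succ, Function.iterate_succ_apply]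

lemma measure_iInter_preimage_iterate_le {α : Type*} [MeasurableSpace α] (μ : Measure α)
    (f : α → α) (c : ℝ≥0∞) {n : ℕ} (A : Fin (n + 1) → Set α) (hA : ∀ k, μ (A k) ≤ 1)
    (hf : ∀ k S, μ (A k ∩ f ⁻¹' S) ≤ c * μ S) :
    μ (⋂ k : Fin (n + 1), f^[k] ⁻¹' A k) ≤ c ^ n := by
  induction n with
  | zero => simpa using (measure_mono (iInter_subset _ 0)).trans (hA 0)
  | succ n ih =>
    rw [iInter_preimage_iterate_fin_succ, pow_succ']
    exact (hf 0 _).trans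
      (mul_le_mul_right (ih (A ∘ Fin.succ) (fun k => hA _) (fun k => hf _)) c)

/-- The cylinder `I_{i₀…iₙ} = ⋂_{k=0}^{n} T^{-k}([i_k - 1, i_k])` has Lebesgue
measure at most `5 ^ (-n)`. -/
theorem cylinder_measure_le (T : ℝ → ℝ) (hT : IsT T) (n : ℕ)
    (i : Fin (n + 1) → ℕ) (hi : ∀ k, 1 ≤ i k) :
    MeasureTheory.volume
        (⋂ k : Fin (n + 1), T^[(k : ℕ)] ⁻¹' Set.Icc ((i k : ℝ) - 1) (i k))
      ≤ ((5 : ENNReal) ^ n)⁻¹ := by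
  rw [ENNReal.inv_pow]
  exact measure_iInter_preimage_iterate_le volume T 5⁻¹ _ (fun k => by simp)
    (fun k => hT.volume_Icc_inter_preimage_le (hi k))
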